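/- Under the hypotheses of the proposition linking λ to the limit set (sample clouds of X_E converge onto G with scaling log n, the angular dependence function λ exists, and the residual tail dependence coefficient η_D exists), one has 1/η_D = d·λ(1/d, …, 1/d) = [min{r ∈ [0,1] : (r,∞)^d ∩ G = ∅}]^{−1}. -/

import Mathlib

/-!
Write `f t = P(min_j exp X_j > t)`. For the uniform weights the angular dependence function gives
`f t = ℓ (t ^ d) * t ^ (-d λ(1/d, …, 1/d))`, so `f` is regularly varying with index `-d λ`, and
uniqueness of the index yields `1/η = d λ`.

For the limit set, look along `n = 2 ^ k`: the ratio test applied to `n f(n ^ s)` shows that it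
tends to `∞` for `s < η` and to `0` for `s > η`. The probability that one of `n` observations lies
in the corner `(s log n, ∞)^d` is at least `1 - exp (-n f(n ^ s))` by independence and at most
`n f(n ^ s)` by the union bound. If `r < s < η` and `(r, ∞)^d` missed `G`, such an observation
would keep the scaled cloud at Hausdorff distance `s - r` from `G` with probability tending to one.
If `G` met `(η, ∞)^d`, a cloud close to `G` would need an observation in a corner `(s, ∞)^d` with
`s > η`, an event of vanishing probability. Hence `η` is the least `r` with `(r, ∞)^d ∩ G = ∅`.
-/

open MeasureTheory Filter Topology ProbabilityTheory Pointwise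

/-- The `n`-point sample cloud `{X 1 / r n, …, X n / r n}` of the scaled observations. -/
def sampleCloud {Ω : Type*} {d : ℕ} (X : ℕ → Ω → (Fin d → ℝ)) (r : ℕ → ℝ)
    (n : ℕ) (ω : Ω) : Set (Fin d → ℝ) :=
  {y | ∃ i, 1 ≤ i ∧ i ≤ n ∧ y = (r n)⁻¹ • X i ω}

/-- Convergence in probability of random sets onto a deterministic set `G`, in the sense that
the Hausdorff distance to `G` tends to `0` in probability. -/
def ConvInProbOnto {Ω : Type*} [MeasurableSpace Ω] {d : ℕ} (μ : Measure Ω)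
    (N : ℕ → Ω → Set (Fin d → ℝ)) (G : Set (Fin d → ℝ)) : Prop :=
  ∀ ε : ℝ, 0 < ε →
    Tendsto (fun n => μ {ω | ε < Metric.hausdorffDist (N n ω) G}) atTop (𝓝 0)

/-- `ℓ` is slowly varying at infinity. -/
def SlowlyVaryingAtTop (ℓ : ℝ → ℝ) : Prop :=
  ∀ x : ℝ, 0 < x → Tendsto (fun t => ℓ (t * x) / ℓ t) atTop (𝓝 1)

/-- `f` is regularly varying at infinity with index `ρ`. -/
def RegVaryingAtTop (f : ℝ → ℝ) (ρ : ℝ) : Prop :=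
  ∀ x : ℝ, 0 < x → Tendsto (fun t => f (t * x) / f t) atTop (𝓝 (x ^ ρ))

theorem tendsto_zero_of_ratio_lt_one {a : ℕ → ℝ} {L : ℝ} (ha : ∀ k, 0 < a k)
    (h : Tendsto (fun k => a (k + 1) / a k) atTop (𝓝 L)) (hL : L < 1) :
    Tendsto a atTop (𝓝 0) :=
  (summable_of_ratio_test_tendsto_lt_one hL (.of_forall fun k => (ha k).ne')
    (by simpa only [Real.norm_of_nonneg (ha _).le] using h)).tendsto_atTop_zero

theorem tendsto_atTop_of_ratio_gt_one {a : ℕ → ℝ} {L : ℝ} (ha : ∀ k, 0 < a k)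
    (h : Tendsto (fun k => a (k + 1) / a k) atTop (𝓝 L)) (hL : 1 < L) :
    Tendsto a atTop atTop := by
  have hinv_pos : ∀ k, 0 < (a k)⁻¹ := fun k => inv_pos.2 (ha k)
  have hratio : Tendsto (fun k => (a (k + 1))⁻¹ / (a k)⁻¹) atTop (𝓝 L⁻¹) :=
    (h.inv₀ (by positivity)).congr fun k => by rw [inv_div, inv_div_inv]
  have hinv := tendsto_zero_of_ratio_lt_one hinv_pos hratio (inv_lt_one_of_one_lt₀ hL)
  exact (tendsto_inv_nhdsGT_zero.comp
    (tendsto_nhdsWithin_iff.2 ⟨hinv, .of_forall hinv_pos⟩)).congr fun k => inv_inv (a k)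

namespace RegVaryingAtTop

variable {f g : ℝ → ℝ} {ρ : ℝ}

theorem _root_.SlowlyVaryingAtTop.regVaryingAtTop {ℓ : ℝ → ℝ} (hℓ : SlowlyVaryingAtTop ℓ) :
    RegVaryingAtTop ℓ 0 := fun x hx => by simpa only [Real.rpow_zero] using hℓ x hx

theorem congr' (hf : RegVaryingAtTop f ρ) (hfg : f =ᶠ[atTop] g) : RegVaryingAtTop g ρ := by
  intro x hx
  refine (hf x hx).congr' ?_
  filter_upwards [hfg, (tendsto_id.atTop_mul_const hx).eventually hfg] with t ht htx
  simp only [id] at htx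
  rw [ht, htx]

theorem comp_rpow (hf : RegVaryingAtTop f ρ) {c : ℝ} (hc : 0 < c) :
    RegVaryingAtTop (fun t => f (t ^ c)) (ρ * c) := by
  intro x hx
  have h := (hf (x ^ c) (Real.rpow_pos_of_pos hx c)).comp (tendsto_rpow_atTop hc)
  rw [← Real.rpow_mul hx.le, mul_comm] at h
  refine h.congr' ?_
  filter_upwards [eventually_ge_atTop 0] with t ht
  simp only [Function.comp_apply, Real.mul_rpow ht hx.le]

theorem mul_rpow (hf : RegVaryingAtTop f ρ) (σ : ℝ) :
    RegVaryingAtTop (fun t => f t * t ^ σ) (ρ + σ) := by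
  intro x hx
  rw [Real.rpow_add hx]
  refine ((hf x hx).mul_const (x ^ σ)).congr' ?_
  filter_upwards [eventually_gt_atTop 0] with t ht
  rw [mul_div_mul_comm, Real.mul_rpow ht.le hx.le,
    mul_div_cancel_left₀ _ (Real.rpow_pos_of_pos ht σ).ne']

theorem index_unique {ρ' : ℝ} (hf : RegVaryingAtTop f ρ) (hf' : RegVaryingAtTop f ρ') : ρ = ρ' := by
  have h := tendsto_nhds_unique (hf _ (Real.exp_pos 1)) (hf' _ (Real.exp_pos 1))
  rwa [Real.exp_one_rpow, Real.exp_one_rpow, Real.exp_eq_exp] at h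

theorem eventually_ne_zero (hf : RegVaryingAtTop f ρ) : ∀ᶠ t in atTop, f t ≠ 0 := by
  have h := hf 1 one_pos
  rw [Real.one_rpow] at h
  filter_upwards [h.eventually_ne one_ne_zero] with t ht hft
  simp [hft] at ht

theorem pos_of_antitone (hf : RegVaryingAtTop f ρ) (hanti : Antitone f) (hnonneg : ∀ t, 0 ≤ f t)
    (t : ℝ) : 0 < f t := by
  obtain ⟨s, hs, hts⟩ := (hf.eventually_ne_zero.and (eventually_ge_atTop t)).exists
  exact ((hnonneg s).lt_of_ne hs.symm).trans_le (hanti hts)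

theorem tendsto_ratio_pow_mul_comp_pow (hf : RegVaryingAtTop f ρ) {b c : ℝ} (hb : b ≠ 0)
    (hc : 1 < c) :
    Tendsto (fun k : ℕ => b ^ (k + 1) * f (c ^ (k + 1)) / (b ^ k * f (c ^ k))) atTop
      (𝓝 (b * c ^ ρ)) := by
  refine (((hf c (zero_lt_one.trans hc)).comp
    (tendsto_pow_atTop_atTop_of_one_lt hc)).const_mul b).congr fun k => ?_
  rw [Function.comp_apply, pow_succ, pow_succ, mul_div_mul_comm,
    mul_div_cancel_left₀ _ (pow_ne_zero k hb)]

theorem tendsto_pow_mul_comp_pow_atTop (hf : RegVaryingAtTop f ρ) (hpos : ∀ t, 0 < f t)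
    {b c : ℝ} (hc : 1 < c) (hbc : 1 < b * c ^ ρ) :
    Tendsto (fun k : ℕ => b ^ k * f (c ^ k)) atTop atTop := by
  have hb : 0 < b :=
    pos_of_mul_pos_left (one_pos.trans hbc) (Real.rpow_pos_of_pos (one_pos.trans hc) ρ).le
  exact tendsto_atTop_of_ratio_gt_one (fun k => mul_pos (pow_pos hb k) (hpos _))
    (hf.tendsto_ratio_pow_mul_comp_pow hb.ne' hc) hbc

theorem tendsto_pow_mul_comp_pow_zero (hf : RegVaryingAtTop f ρ) (hpos : ∀ t, 0 < f t)
    {b c : ℝ} (hb : 0 < b) (hc : 1 < c) (hbc : b * c ^ ρ < 1) :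
    Tendsto (fun k : ℕ => b ^ k * f (c ^ k)) atTop (𝓝 0) :=
  tendsto_zero_of_ratio_lt_one (fun k => mul_pos (pow_pos hb k) (hpos _))
    (hf.tendsto_ratio_pow_mul_comp_pow hb.ne' hc) hbc

end RegVaryingAtTop

theorem one_div_eq_mul_of_measureReal_exceedance_eq {Ω : Type*} [MeasurableSpace Ω]
    {μ : Measure Ω} {d : ℕ} (hd : 0 < d) {Y : Ω → Fin d → ℝ} {ℓ : ℝ → ℝ}
    (hℓ : SlowlyVaryingAtTop ℓ) {κ : ℝ}
    (hY : ∀ v : ℝ, 0 < v →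
      μ.real {a | ∀ j, 1 / (d : ℝ) * v < Y a j} = ℓ (Real.exp v) * Real.exp (-(κ * v)))
    {η : ℝ} (hRV : RegVaryingAtTop (fun t => μ.real {a | ∀ j, t < Real.exp (Y a j)}) (-1 / η)) :
    1 / η = d * κ := by
  have hdR : (0 : ℝ) < d := Nat.cast_pos.2 hd
  have hform : (fun t => ℓ (t ^ (d : ℝ)) * t ^ (-(d * κ))) =ᶠ[atTop]
      fun t => μ.real {a | ∀ j, t < Real.exp (Y a j)} := by
    filter_upwards [eventually_gt_atTop 1] with t ht
    have ht0 : 0 < t := one_pos.trans ht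
    have hset : {a | ∀ j, t < Real.exp (Y a j)} =
        {a | ∀ j, 1 / (d : ℝ) * (d * Real.log t) < Y a j} := by
      simp only [one_div, inv_mul_cancel_left₀ hdR.ne', Real.log_lt_iff_lt_exp ht0]
    rw [hset, hY _ (mul_pos hdR (Real.log_pos ht)), Real.rpow_def_of_pos ht0,
      Real.rpow_def_of_pos ht0]
    ring_nf
  have hindex := hRV.index_unique (((hℓ.regVaryingAtTop.comp_rpow hdR).mul_rpow _).congr' hform)
  rw [zero_mul, zero_add, neg_div] at hindex
  exact neg_inj.1 hindex

section Corner

variable {ι : Type*} [Fintype ι] {s G : Set (ι → ℝ)} {r r' : ℝ}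

theorem le_hausdorffDist_of_forall_lt (hs : Bornology.IsBounded s) (hG : Bornology.IsBounded G)
    (hGne : G.Nonempty) {y : ι → ℝ} (hy : y ∈ s) (hyr : ∀ j, r' < y j)
    (hGr : {x | ∀ j, r < x j} ∩ G = ∅) :
    r' - r ≤ Metric.hausdorffDist s G := by
  have hfin := Metric.hausdorffEDist_ne_top_of_nonempty_of_bounded ⟨y, hy⟩ hGne hs hG
  refine le_trans ?_ (Metric.infDist_le_hausdorffDist_of_mem hy hfin)
  refine (Metric.le_infDist hGne).2 fun g hg => ?_
  obtain ⟨j, hgj⟩ : ∃ j, g j ≤ r := by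
    by_contra! h
    exact (Set.eq_empty_iff_forall_notMem.1 hGr) g ⟨h, hg⟩
  calc r' - r ≤ y j - g j := by linarith [hyr j]
    _ ≤ |y j - g j| := le_abs_self _
    _ ≤ dist y g := dist_le_pi_dist y g j

theorem exists_forall_lt_of_hausdorffDist_lt (hs : Bornology.IsBounded s) (hsne : s.Nonempty)
    (hG : Bornology.IsBounded G) {g : ι → ℝ} (hg : g ∈ G) {ε : ℝ} (hgr : ∀ j, r + ε ≤ g j)
    (hsG : Metric.hausdorffDist s G < ε) : ∃ y ∈ s, ∀ j, r < y j := by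
  have hfin := Metric.hausdorffEDist_ne_top_of_nonempty_of_bounded hsne ⟨g, hg⟩ hs hG
  obtain ⟨y, hy, hyg⟩ := Metric.exists_dist_lt_of_hausdorffDist_lt' hg hsG hfin
  refine ⟨y, hy, fun j => ?_⟩
  have hj : |y j - g j| < ε := (dist_le_pi_dist y g j).trans_lt hyg
  linarith [hgr j, neg_abs_le (y j - g j)]

end Corner

section IID

variable {Ω ι E : Type*} [MeasurableSpace Ω] {μ : Measure Ω} [MeasurableSpace E]
  {X : ι → Ω → E} {i₀ : ι} {B : Set E}

theorem measureReal_preimage_eq_of_map_eq (hX : ∀ i, Measurable (X i))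
    (hident : ∀ i, μ.map (X i) = μ.map (X i₀)) (hB : MeasurableSet B) (i : ι) :
    μ.real (X i ⁻¹' B) = μ.real (X i₀ ⁻¹' B) := by
  have hXi : IdentDistrib (X i) (X i₀) μ μ := ⟨(hX i).aemeasurable, (hX i₀).aemeasurable, hident i⟩
  rw [Measure.real, Measure.real, hXi.measure_mem_eq hB]

theorem measureReal_biUnion_preimage_le (hX : ∀ i, Measurable (X i))
    (hident : ∀ i, μ.map (X i) = μ.map (X i₀)) (hB : MeasurableSet B) (S : Finset ι) :
    μ.real (⋃ i ∈ S, X i ⁻¹' B) ≤ S.card * μ.real (X i₀ ⁻¹' B) :=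
  calc μ.real (⋃ i ∈ S, X i ⁻¹' B) ≤ ∑ i ∈ S, μ.real (X i ⁻¹' B) :=
        measureReal_biUnion_finset_le S _
    _ = S.card * μ.real (X i₀ ⁻¹' B) := by
        simp [measureReal_preimage_eq_of_map_eq hX hident hB]

theorem one_sub_exp_le_measureReal_biUnion_preimage [IsProbabilityMeasure μ]
    (hX : ∀ i, Measurable (X i)) (hindep : iIndepFun X μ)
    (hident : ∀ i, μ.map (X i) = μ.map (X i₀)) (hB : MeasurableSet B)
    (S : Finset ι) :
    1 - Real.exp (-(S.card * μ.real (X i₀ ⁻¹' B))) ≤ μ.real (⋃ i ∈ S, X i ⁻¹' B) := by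
  have hsame : ∀ i, μ.real (X i ⁻¹' Bᶜ) = 1 - μ.real (X i₀ ⁻¹' B) := fun i => by
    rw [Set.preimage_compl, measureReal_compl (hX i hB), probReal_univ,
      measureReal_preimage_eq_of_map_eq hX hident hB]
  have hmiss : μ.real (⋂ i ∈ S, X i ⁻¹' Bᶜ) = (1 - μ.real (X i₀ ⁻¹' B)) ^ S.card := by
    rw [Measure.real, hindep.meas_biInter fun i _ => ⟨Bᶜ, hB.compl, rfl⟩, ENNReal.toReal_prod]
    exact (Finset.prod_congr rfl fun i _ => hsame i).trans (Finset.prod_const _)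
  have hunion : (⋃ i ∈ S, X i ⁻¹' B) = (⋂ i ∈ S, X i ⁻¹' Bᶜ)ᶜ := by
    simp only [Set.compl_iInter, Set.preimage_compl, compl_compl]
  have hmeas : MeasurableSet (⋂ i ∈ S, X i ⁻¹' Bᶜ) :=
    Finset.measurableSet_biInter S fun i _ => hX i hB.compl
  calc 1 - Real.exp (-(S.card * μ.real (X i₀ ⁻¹' B)))
      = 1 - Real.exp (-μ.real (X i₀ ⁻¹' B)) ^ S.card := by
        rw [← Real.exp_nat_mul, mul_neg]
    _ ≤ 1 - (1 - μ.real (X i₀ ⁻¹' B)) ^ S.card := by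
        gcongr
        · linarith [measureReal_le_one (μ := μ) (s := X i₀ ⁻¹' B)]
        · exact Real.one_sub_le_exp_neg _
    _ = μ.real (⋃ i ∈ S, X i ⁻¹' B) := by
        rw [hunion, measureReal_compl hmeas, probReal_univ, hmiss]

end IID

theorem ConvInProbOnto.tendsto_measureReal {Ω : Type*} [MeasurableSpace Ω] {d : ℕ}
    {μ : Measure Ω} {N : ℕ → Ω → Set (Fin d → ℝ)} {G : Set (Fin d → ℝ)}
    (h : ConvInProbOnto μ N G) {ε : ℝ} (hε : 0 < ε) :
    Tendsto (fun n => μ.real {ω | ε < Metric.hausdorffDist (N n ω) G}) atTop (𝓝 0) := by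
  rw [← ENNReal.toReal_zero]
  exact (ENNReal.tendsto_toReal ENNReal.zero_ne_top).comp (h ε hε)

section SampleCloud

variable {Ω : Type*} {d : ℕ} {X : ℕ → Ω → (Fin d → ℝ)} {a : ℕ → ℝ} {G : Set (Fin d → ℝ)}
  {n : ℕ} {r s ε : ℝ}

theorem sampleCloud_finite (n : ℕ) (ω : Ω) : (sampleCloud X a n ω).Finite :=
  ((Set.finite_Icc 1 n).image fun i => (a n)⁻¹ • X i ω).subset
    fun _ ⟨i, h1, h2, hy⟩ => ⟨i, ⟨h1, h2⟩, hy.symm⟩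

theorem forall_lt_inv_smul_iff {c : ℝ} (hc : 0 < c) {x : Fin d → ℝ} :
    (∀ j, s < (c⁻¹ • x) j) ↔ ∀ j, s * c < x j := by
  simp only [Pi.smul_apply, smul_eq_mul, lt_inv_mul_iff₀' hc]

theorem biUnion_preimage_corner_subset_hausdorffDist_gt (ha : 0 < a n)
    (hG : Bornology.IsBounded G) (hGne : G.Nonempty) (hGr : {x | ∀ j, r < x j} ∩ G = ∅)
    (hε : ε < s - r) :
    ⋃ i ∈ Finset.Icc 1 n, X i ⁻¹' {x | ∀ j, s * a n < x j} ⊆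
      {ω | ε < Metric.hausdorffDist (sampleCloud X a n ω) G} := by
  intro ω hω
  simp only [Set.mem_iUnion, Finset.mem_Icc, Set.mem_preimage] at hω
  obtain ⟨i, ⟨hi1, hin⟩, hXi⟩ := hω
  exact hε.trans_le <| le_hausdorffDist_of_forall_lt (sampleCloud_finite n ω).isBounded hG hGne
    ⟨i, hi1, hin, rfl⟩ ((forall_lt_inv_smul_iff ha).2 hXi) hGr

theorem hausdorffDist_le_subset_biUnion_preimage_corner (hn : 1 ≤ n) (ha : 0 < a n)
    (hG : Bornology.IsBounded G) {g : Fin d → ℝ} (hg : g ∈ G) (hgs : ∀ j, s + 2 * ε ≤ g j)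
    (hε : 0 < ε) :
    {ω | ε < Metric.hausdorffDist (sampleCloud X a n ω) G}ᶜ ⊆
      ⋃ i ∈ Finset.Icc 1 n, X i ⁻¹' {x | ∀ j, s * a n < x j} := by
  intro ω hω
  replace hω : Metric.hausdorffDist (sampleCloud X a n ω) G ≤ ε := not_lt.1 hω
  obtain ⟨y, ⟨i, hi1, hin, rfl⟩, hy⟩ := exists_forall_lt_of_hausdorffDist_lt
    (sampleCloud_finite n ω).isBounded ⟨_, 1, le_rfl, hn, rfl⟩ hG hg hgs (by linarith)
  exact Set.mem_biUnion (Finset.mem_Icc.2 ⟨hi1, hin⟩) ((forall_lt_inv_smul_iff ha).1 hy)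

end SampleCloud

theorem measurableSet_setOf_forall_lt {ι : Type*} [Countable ι] (c : ℝ) :
    MeasurableSet {x : ι → ℝ | ∀ j, c < x j} := by
  rw [Set.ofPred_forall]
  exact MeasurableSet.iInter fun j => measurableSet_lt measurable_const (measurable_pi_apply j)

theorem two_mul_rpow_rpow_neg_one_div (s η : ℝ) :
    2 * ((2 : ℝ) ^ s) ^ (-1 / η) = 2 ^ (1 - s / η) := by
  rw [← Real.rpow_mul zero_le_two, sub_eq_add_neg, Real.rpow_add two_pos, Real.rpow_one]
  ring_nf

section Exceedance

variable {Ω ι : Type*} [MeasurableSpace Ω] {μ : Measure Ω} {Y : Ω → ι → ℝ} {ρ η s : ℝ}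

theorem measureReal_exceedance_pos [IsFiniteMeasure μ]
    (hRV : RegVaryingAtTop (fun t => μ.real {a | ∀ j, t < Real.exp (Y a j)}) ρ) (t : ℝ) :
    0 < μ.real {a | ∀ j, t < Real.exp (Y a j)} :=
  hRV.pos_of_antitone (fun _ _ h => measureReal_mono fun _ ha j => h.trans_lt (ha j))
    (fun _ => measureReal_nonneg) t

theorem measureReal_preimage_corner_log_two_pow (k : ℕ) :
    μ.real (Y ⁻¹' {x | ∀ j, s * Real.log (2 ^ k) < x j}) =
      μ.real {a | ∀ j, ((2 : ℝ) ^ s) ^ k < Real.exp (Y a j)} := by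
  have h : ((2 : ℝ) ^ s) ^ k = Real.exp (s * Real.log (2 ^ k)) := by
    rw [Real.rpow_pow_comm zero_le_two, Real.rpow_def_of_pos (by positivity), mul_comm]
  simp only [h, Real.exp_lt_exp]
  rfl

variable [IsFiniteMeasure μ]

theorem tendsto_two_pow_mul_measureReal_corner_atTop
    (hRV : RegVaryingAtTop (fun t => μ.real {a | ∀ j, t < Real.exp (Y a j)}) (-1 / η))
    (hs : 0 < s) (hsη : s < η) :
    Tendsto (fun k : ℕ => 2 ^ k * μ.real (Y ⁻¹' {x | ∀ j, s * Real.log (2 ^ k) < x j}))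
      atTop atTop := by
  simp only [measureReal_preimage_corner_log_two_pow]
  refine hRV.tendsto_pow_mul_comp_pow_atTop (measureReal_exceedance_pos hRV)
    (Real.one_lt_rpow one_lt_two hs) ?_
  rw [two_mul_rpow_rpow_neg_one_div]
  exact Real.one_lt_rpow one_lt_two (by linarith [(div_lt_one (hs.trans hsη)).2 hsη])

theorem tendsto_two_pow_mul_measureReal_corner_zero
    (hRV : RegVaryingAtTop (fun t => μ.real {a | ∀ j, t < Real.exp (Y a j)}) (-1 / η))
    (hη : 0 < η) (hsη : η < s) :
    Tendsto (fun k : ℕ => 2 ^ k * μ.real (Y ⁻¹' {x | ∀ j, s * Real.log (2 ^ k) < x j}))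
      atTop (𝓝 0) := by
  simp only [measureReal_preimage_corner_log_two_pow]
  refine hRV.tendsto_pow_mul_comp_pow_zero (measureReal_exceedance_pos hRV) two_pos
    (Real.one_lt_rpow one_lt_two (hη.trans hsη)) ?_
  rw [two_mul_rpow_rpow_neg_one_div]
  exact Real.rpow_lt_one_of_one_lt_of_neg one_lt_two (by linarith [(one_lt_div hη).2 hsη])

end Exceedance

section LimitSet

variable {Ω : Type*} [MeasurableSpace Ω] {μ : Measure Ω} [IsProbabilityMeasure μ] {d : ℕ}
  {X : ℕ → Ω → (Fin d → ℝ)} {G : Set (Fin d → ℝ)} {η : ℝ}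

theorem log_natCast_two_pow_pos {k : ℕ} (hk : 1 ≤ k) : 0 < Real.log ((2 ^ k : ℕ) : ℝ) :=
  Real.log_pos (by exact_mod_cast Nat.one_lt_two_pow_iff.2 (by omega))

theorem corner_inter_limitSet_nonempty (hX : ∀ i, Measurable (X i)) (hindep : iIndepFun X μ)
    (hident : ∀ i, μ.map (X i) = μ.map (X 0)) (hG : Bornology.IsBounded G) (hGne : G.Nonempty)
    (hconv : ConvInProbOnto μ (sampleCloud X fun n => Real.log n) G) (hη : 0 < η)
    (hRV : RegVaryingAtTop (fun t => μ.real {a | ∀ j, t < Real.exp (X 0 a j)}) (-1 / η))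
    {r : ℝ} (hr : r < η) : ({x | ∀ j, r < x j} ∩ G).Nonempty := by
  by_contra hempty
  rw [Set.not_nonempty_iff_eq_empty] at hempty
  obtain ⟨s, hrs, hsη⟩ := exists_between (max_lt hr hη)
  have hε : 0 < (s - r) / 2 := by linarith [le_max_left r 0]
  have hhit := tendsto_const_nhds (x := (1 : ℝ)) |>.sub <| Real.tendsto_exp_atBot.comp <|
    tendsto_neg_atTop_atBot.comp <|
      tendsto_two_pow_mul_measureReal_corner_atTop hRV ((le_max_right r 0).trans_lt hrs) hsη
  have hfar := (hconv.tendsto_measureReal hε).comp (tendsto_pow_atTop_atTop_of_one_lt one_lt_two)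
  refine absurd (le_of_tendsto_of_tendsto hhit hfar ?_) (by norm_num)
  filter_upwards [eventually_ge_atTop 1] with k hk
  have hhit_le := one_sub_exp_le_measureReal_biUnion_preimage hX hindep hident
    (measurableSet_setOf_forall_lt (s * Real.log ((2 ^ k : ℕ) : ℝ))) (Finset.Icc 1 (2 ^ k))
  have hsub := biUnion_preimage_corner_subset_hausdorffDist_gt (X := X) (a := fun n => Real.log n)
    (n := 2 ^ k) (log_natCast_two_pow_pos hk)
    hG hGne hempty (show (s - r) / 2 < s - r by linarith)
  simp only [Nat.card_Icc, add_tsub_cancel_right, Nat.cast_pow, Nat.cast_ofNat] at hhit_le hsub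
  exact hhit_le.trans (measureReal_mono hsub)

theorem corner_inter_limitSet_eq_empty (hX : ∀ i, Measurable (X i))
    (hident : ∀ i, μ.map (X i) = μ.map (X 0)) (hG : Bornology.IsBounded G)
    (hconv : ConvInProbOnto μ (sampleCloud X fun n => Real.log n) G) (hη : 0 < η)
    (hRV : RegVaryingAtTop (fun t => μ.real {a | ∀ j, t < Real.exp (X 0 a j)}) (-1 / η)) :
    {x | ∀ j, η < x j} ∩ G = ∅ := by
  refine Set.eq_empty_iff_forall_notMem.2 fun g ⟨hgη, hg⟩ => ?_
  obtain ⟨t, hgt, hηt⟩ := ((eventually_all.2 fun j => eventually_lt_nhds (hgη j)).filter_mono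
    nhdsWithin_le_nhds |>.and self_mem_nhdsWithin).exists (f := 𝓝[>] η)
  have hε : 0 < (t - η) / 4 := by linarith
  have hfar := (hconv.tendsto_measureReal hε).comp (tendsto_pow_atTop_atTop_of_one_lt one_lt_two)
  have hhit := tendsto_two_pow_mul_measureReal_corner_zero hRV hη
    (show η < (η + t) / 2 by linarith)
  refine absurd (le_of_tendsto_of_tendsto (tendsto_const_nhds (x := (1 : ℝ))) (hfar.add hhit) ?_)
    (by norm_num)
  filter_upwards [eventually_ge_atTop 1] with k hk
  have hsub := hausdorffDist_le_subset_biUnion_preimage_corner (X := X)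
    (a := fun n => Real.log n) (Nat.one_le_two_pow) (log_natCast_two_pow_pos hk) hG hg
    (fun j => (show (η + t) / 2 + 2 * ((t - η) / 4) = t by ring) ▸ (hgt j).le) hε
  have hunion_le := measureReal_biUnion_preimage_le (μ := μ) hX hident
    (measurableSet_setOf_forall_lt ((η + t) / 2 * Real.log ((2 ^ k : ℕ) : ℝ)))
    (Finset.Icc 1 (2 ^ k))
  simp only [Nat.card_Icc, add_tsub_cancel_right, Nat.cast_pow, Nat.cast_ofNat] at hunion_le hsub
  rw [Function.comp_apply, ← probReal_univ (μ := μ), ← Set.compl_subset_iff_union.1 hsub]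
  exact (measureReal_union_le _ _).trans (by gcongr)

end LimitSet

theorem residual_tail_dependence_via_limit_set_general
    {Ω : Type*} [MeasurableSpace Ω] (μ : Measure Ω) [IsProbabilityMeasure μ]
    {d : ℕ} (hd : 0 < d)
    (X : ℕ → Ω → (Fin d → ℝ)) (hXmeas : ∀ i, Measurable (X i))
    -- i.i.d. copies with standard exponential margins
    (hindep : iIndepFun X μ)
    (hident : ∀ i, Measure.map (X i) μ = Measure.map (X 0) μ)
    -- the limit set G
    (G : Set (Fin d → ℝ)) (hGcomp : IsCompact G)
    (hGsup : ∀ j, IsLUB ((fun x : Fin d → ℝ => x j) '' G) 1)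
    (hconv : ConvInProbOnto μ (sampleCloud X fun n => Real.log n) G)
    -- the angular dependence function λ(ω)
    (lam : (Fin d → ℝ) → ℝ)
    (hlam : ∀ ω : Fin d → ℝ, (∀ j, 0 ≤ ω j) → ∑ j, ω j = 1 →
      ∃ ℓ : ℝ → ℝ, SlowlyVaryingAtTop ℓ ∧ ∀ v : ℝ, 0 < v →
        (μ {a | ∀ j, ω j * v < X 0 a j}).toReal = ℓ (Real.exp v) * Real.exp (-(lam ω * v)))
    -- the residual tail dependence coefficient η_D (in Pareto margins X_P = exp X_E)
    (η : ℝ) (hη : 0 < η) (hη1 : η ≤ 1)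
    (hηRV : RegVaryingAtTop
      (fun t => (μ {a | ∀ j, t < Real.exp (X 0 a j)}).toReal) (-1 / η)) :
    1 / η = d * lam (fun _ => 1 / d) ∧
    1 / η = (sInf {r : ℝ | r ∈ Set.Icc (0:ℝ) 1 ∧
      {x : Fin d → ℝ | ∀ j, r < x j} ∩ G = ∅})⁻¹ := by
  have hGne : G.Nonempty := Set.image_nonempty.1 (hGsup ⟨0, hd⟩).nonempty
  obtain ⟨ℓ, hℓ, hℓeq⟩ := hlam (fun _ => 1 / d) (fun _ => by positivity) (by simp [hd.ne'])
  refine ⟨one_div_eq_mul_of_measureReal_exceedance_eq hd hℓ hℓeq hηRV, ?_⟩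
  have hG := hGcomp.isBounded
  have hleast : IsLeast {r : ℝ | r ∈ Set.Icc (0:ℝ) 1 ∧ {x : Fin d → ℝ | ∀ j, r < x j} ∩ G = ∅} η :=
    ⟨⟨⟨hη.le, hη1⟩, corner_inter_limitSet_eq_empty hXmeas hident hG hconv hη hηRV⟩,
      fun r ⟨_, hr⟩ => not_lt.1 fun hrη =>
        (corner_inter_limitSet_nonempty hXmeas hindep hident hG hGne hconv hη hηRV hrη).ne_empty hr⟩
  rw [hleast.csInf_eq, one_div]

/-- Corollary of Proposition 7, after Nolde (2014): under the hypotheses of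
the proposition linking `λ` to the limit set, with `η_D` the residual tail dependence
coefficient, `1/η_D = d·λ(1/d,…,1/d) = [min{r ∈ [0,1] : (r,∞)^d ∩ G = ∅}]⁻¹`. -/
theorem residual_tail_dependence_via_limit_set
    {Ω : Type*} [MeasurableSpace Ω] (μ : Measure Ω) [IsProbabilityMeasure μ]
    {d : ℕ} (hd : 0 < d)
    (X : ℕ → Ω → (Fin d → ℝ)) (hXmeas : ∀ i, Measurable (X i))
    -- i.i.d. copies with standard exponential margins
    (hindep : iIndepFun X μ)
    (hident : ∀ i, Measure.map (X i) μ = Measure.map (X 0) μ)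
    (hmarg : ∀ j, ∀ x : ℝ, 0 ≤ x → (μ {ω | x < X 0 ω j}).toReal = Real.exp (-x))
    -- the limit set G
    (G : Set (Fin d → ℝ)) (hGcomp : IsCompact G)
    (hGsub : G ⊆ {x | ∀ j, x j ∈ Set.Icc (0:ℝ) 1})
    (hGsup : ∀ j, IsLUB ((fun x : Fin d → ℝ => x j) '' G) 1)
    (hconv : ConvInProbOnto μ (sampleCloud X fun n => Real.log n) G)
    -- the angular dependence function λ(ω)
    (lam : (Fin d → ℝ) → ℝ)
    (hlam : ∀ ω : Fin d → ℝ, (∀ j, 0 ≤ ω j) → ∑ j, ω j = 1 →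
      ∃ ℓ : ℝ → ℝ, SlowlyVaryingAtTop ℓ ∧ ∀ v : ℝ, 0 < v →
        (μ {a | ∀ j, ω j * v < X 0 a j}).toReal = ℓ (Real.exp v) * Real.exp (-(lam ω * v)))
    -- the residual tail dependence coefficient η_D (in Pareto margins X_P = exp X_E)
    (η : ℝ) (hη : 0 < η) (hη1 : η ≤ 1)
    (hηRV : RegVaryingAtTop
      (fun t => (μ {a | ∀ j, t < Real.exp (X 0 a j)}).toReal) (-1 / η)) :
    1 / η = d * lam (fun _ => 1 / d) ∧
    1 / η = (sInf {r : ℝ | r ∈ Set.Icc (0:ℝ) 1 ∧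
      {x : Fin d → ℝ | ∀ j, r < x j} ∩ G = ∅})⁻¹ :=
  residual_tail_dependence_via_limit_set_general μ hd X hXmeas hindep hident G hGcomp hGsup hconv
    lam hlam η hη hη1 hηRV
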